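/- For every prime number p with p ≡ 1 (mod 4), the set of quadruples (a₀,a₁,a₂,a₃) ∈ ℤ⁴ satisfying a₀ > 0, a₀ odd, a₁, a₂ and a₃ even, and a₀² + a₁² + a₂² + a₃² = p, has exactly p + 1 elements. -/
import Mathlib

namespace QCount

abbrev Q := ℤ × ℤ × ℤ × ℤ

def nrm (a : Q) : ℤ := a.1^2 + a.2.1^2 + a.2.2.1^2 + a.2.2.2^2

def qmul (a b : Q) : Q :=
  (a.1*b.1 - a.2.1*b.2.1 - a.2.2.1*b.2.2.1 - a.2.2.2*b.2.2.2,
   a.1*b.2.1 + a.2.1*b.1 + a.2.2.1*b.2.2.2 - a.2.2.2*b.2.2.1,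
   a.1*b.2.2.1 - a.2.1*b.2.2.2 + a.2.2.1*b.1 + a.2.2.2*b.2.1,
   a.1*b.2.2.2 + a.2.1*b.2.2.1 - a.2.2.1*b.2.1 + a.2.2.2*b.1)

def qconj (a : Q) : Q := (a.1, -a.2.1, -a.2.2.1, -a.2.2.2)

lemma nrm_qmul (a b : Q) : nrm (qmul a b) = nrm a * nrm b := by
  obtain ⟨a0,a1,a2,a3⟩ := a; obtain ⟨b0,b1,b2,b3⟩ := b
  simp only [nrm, qmul]; ring

lemma nrm_qconj (a : Q) : nrm (qconj a) = nrm a := by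
  obtain ⟨a0,a1,a2,a3⟩ := a; simp only [nrm, qconj]; ring

section Field

variable {F : Type*} [Field F] (u w : F)

def MA (a : Q) : F := (a.1 : F) + a.2.1*u - a.2.2.2*w
def MB (a : Q) : F := (a.2.2.1 : F) + a.2.1*w + a.2.2.2*u
def MC (a : Q) : F := -(a.2.2.1 : F) + a.2.1*w + a.2.2.2*u
def MD (a : Q) : F := (a.1 : F) - a.2.1*u + a.2.2.2*w

variable (huw : u^2 + w^2 = -1)
include huw

lemma mulMA (a b : Q) : MA u w (qmul a b) = MA u w a * MA u w b + MB u w a * MC u w b := by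
  obtain ⟨a0,a1,a2,a3⟩ := a; obtain ⟨b0,b1,b2,b3⟩ := b
  simp only [MA, MB, MC, qmul]; push_cast
  linear_combination (-(a3:F)*b3 - a1*b1) * huw

lemma mulMB (a b : Q) : MB u w (qmul a b) = MA u w a * MB u w b + MB u w a * MD u w b := by
  obtain ⟨a0,a1,a2,a3⟩ := a; obtain ⟨b0,b1,b2,b3⟩ := b
  simp only [MA, MB, MD, qmul]; push_cast
  linear_combination ((a3:F)*b1 - a1*b3) * huw

lemma mulMC (a b : Q) : MC u w (qmul a b) = MC u w a * MA u w b + MD u w a * MC u w b := by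
  obtain ⟨a0,a1,a2,a3⟩ := a; obtain ⟨b0,b1,b2,b3⟩ := b
  simp only [MA, MC, MD, qmul]; push_cast
  linear_combination (-(a3:F)*b1 + a1*b3) * huw

lemma mulMD (a b : Q) : MD u w (qmul a b) = MC u w a * MB u w b + MD u w a * MD u w b := by
  obtain ⟨a0,a1,a2,a3⟩ := a; obtain ⟨b0,b1,b2,b3⟩ := b
  simp only [MB, MC, MD, qmul]; push_cast
  linear_combination (-(a3:F)*b3 - a1*b1) * huw

lemma detM (a : Q) : MA u w a * MD u w a - MB u w a * MC u w a = (nrm a : F) := by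
  obtain ⟨a0,a1,a2,a3⟩ := a
  simp only [MA, MB, MC, MD, nrm]; push_cast
  linear_combination (-(a3:F)^2 - a1^2) * huw

omit huw

lemma conjMA (a : Q) : MA u w (qconj a) = MD u w a := by
  obtain ⟨a0,a1,a2,a3⟩ := a; simp only [MA, MD, qconj]; push_cast; ring

lemma conjMB (a : Q) : MB u w (qconj a) = -MB u w a := by
  obtain ⟨a0,a1,a2,a3⟩ := a; simp only [MB, qconj]; push_cast; ring

lemma conjMC (a : Q) : MC u w (qconj a) = -MC u w a := by
  obtain ⟨a0,a1,a2,a3⟩ := a; simp only [MC, qconj]; push_cast; ring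

lemma conjMD (a : Q) : MD u w (qconj a) = MA u w a := by
  obtain ⟨a0,a1,a2,a3⟩ := a; simp only [MA, MD, qconj]; push_cast; ring

include huw in
/-- Injectivity of the matrix representation, given `2 ≠ 0`. -/
lemma Minj (two_ne : (2:F) ≠ 0) (a : Q)
    (hA : MA u w a = 0) (hB : MB u w a = 0) (hC : MC u w a = 0) (hD : MD u w a = 0) :
    ((a.1 : F) = 0 ∧ (a.2.1 : F) = 0 ∧ (a.2.2.1 : F) = 0 ∧ (a.2.2.2 : F) = 0) := by
  obtain ⟨a0,a1,a2,a3⟩ := a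
  simp only [MA, MB, MC, MD] at hA hB hC hD
  refine ⟨?_, ?_, ?_, ?_⟩
  · have h : (2:F) * (a0 : F) = 0 := by linear_combination hA + hD
    rcases mul_eq_zero.1 h with h | h; · exact absurd h two_ne
    exact h
  · have h : (2:F) * (a1 : F) = 0 := by
      linear_combination (-u) * hA - w * hB - w * hC + u * hD + (2*(a1:F)) * huw
    rcases mul_eq_zero.1 h with h | h; · exact absurd h two_ne
    exact h
  · have h : (2:F) * (a2 : F) = 0 := by linear_combination hB - hC
    rcases mul_eq_zero.1 h with h | h; · exact absurd h two_ne
    exact h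
  · have h : (2:F) * (a3 : F) = 0 := by
      linear_combination w * hA - u * hB - u * hC - w * hD + (2*(a3:F)) * huw
    rcases mul_eq_zero.1 h with h | h; · exact absurd h two_ne
    exact h

end Field

section Field2

variable {F : Type*} [Field F] [DecidableEq F] (u w : F)

def Kills (a : Q) : Option F → Prop
  | some x => MA u w a * x + MB u w a = 0 ∧ MC u w a * x + MD u w a = 0
  | none => MA u w a = 0 ∧ MC u w a = 0

/-- the line in `P¹` killed by `M a`. -/
def lineOf (a : Q) : Option F :=
  if MC u w a ≠ 0 then some (-(MD u w a)/(MC u w a))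
  else if MA u w a ≠ 0 then some (-(MB u w a)/(MA u w a)) else none

lemma kills_lineOf (a : Q) (hdet : (nrm a : F) = 0) (huw : u^2 + w^2 = -1) :
    Kills u w a (lineOf u w a) := by
  have hd : MA u w a * MD u w a - MB u w a * MC u w a = 0 := by rw [detM u w huw]; exact hdet
  unfold lineOf
  split_ifs with h1 h2
  · constructor
    · field_simp
      linear_combination -hd
    · field_simp
      ring
  · constructor
    · field_simp
      ring
    · simp only [ne_eq, not_not] at h1
      have hD : MD u w a = 0 := by
        rcases mul_eq_zero.1 (by linear_combination hd + h1 * (MB u w a) : MA u w a * MD u w a = 0)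
          with h | h
        · exact absurd h h2
        · exact h
      rw [h1, hD]; ring
  · simp only [ne_eq, not_not] at h1 h2
    exact ⟨h2, h1⟩

lemma kills_unique (a : Q) (hne : ¬ (MA u w a = 0 ∧ MB u w a = 0 ∧ MC u w a = 0 ∧ MD u w a = 0))
    {l l' : Option F} (h : Kills u w a l) (h' : Kills u w a l') : l = l' := by
  set A := MA u w a; set B := MB u w a; set C := MC u w a; set D := MD u w a
  match l, l' with
  | some x, some y =>
    rcases h with ⟨h1, h2⟩; rcases h' with ⟨h3, h4⟩
    by_cases hxy : x = y
    · rw [hxy]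
    · exfalso
      have hsub : y - x ≠ 0 := sub_ne_zero.2 (Ne.symm hxy)
      have hA : A = 0 := by
        have : A * (x - y) = 0 := by linear_combination h1 - h3
        rcases mul_eq_zero.1 this with h | h
        · exact h
        · exact absurd (sub_eq_zero.1 h) hxy
      have hC : C = 0 := by
        have : C * (x - y) = 0 := by linear_combination h2 - h4
        rcases mul_eq_zero.1 this with h | h
        · exact h
        · exact absurd (sub_eq_zero.1 h) hxy
      have hB : B = 0 := by linear_combination h1 - x * hA
      have hD : D = 0 := by linear_combination h2 - x * hC
      exact hne ⟨hA, hB, hC, hD⟩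
  | some x, none =>
    exfalso
    rcases h with ⟨h1, h2⟩; rcases h' with ⟨h3, h4⟩
    exact hne ⟨h3, by linear_combination h1 - x * h3, h4, by linear_combination h2 - x * h4⟩
  | none, some x =>
    exfalso
    rcases h with ⟨h3, h4⟩; rcases h' with ⟨h1, h2⟩
    exact hne ⟨h3, by linear_combination h1 - x * h3, h4, by linear_combination h2 - x * h4⟩
  | none, none => rfl

lemma kills_qmul (huw : u^2 + w^2 = -1) (g b : Q) {l : Option F} (h : Kills u w b l) :
    Kills u w (qmul g b) l := by
  match l with
  | some x =>
    rcases h with ⟨h1, h2⟩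
    constructor
    · rw [mulMA u w huw, mulMB u w huw]
      linear_combination MA u w g * h1 + MB u w g * h2
    · rw [mulMC u w huw, mulMD u w huw]
      linear_combination MC u w g * h1 + MD u w g * h2
  | none =>
    rcases h with ⟨h1, h2⟩
    constructor
    · rw [mulMA u w huw]; rw [h1, h2]; ring
    · rw [mulMC u w huw]; rw [h1, h2]; ring

lemma kills_of_smul (d : ℤ) (hd : (d : F) ≠ 0) (a c : Q)
    (h0 : c.1 = d * a.1) (h1 : c.2.1 = d * a.2.1) (h2 : c.2.2.1 = d * a.2.2.1)
    (h3 : c.2.2.2 = d * a.2.2.2) {l : Option F} (h : Kills u w c l) : Kills u w a l := by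
  have eA : MA u w c = (d:F) * MA u w a := by
    simp only [MA, h0, h1, h3]; push_cast; ring
  have eB : MB u w c = (d:F) * MB u w a := by
    simp only [MB, h1, h2, h3]; push_cast; ring
  have eC : MC u w c = (d:F) * MC u w a := by
    simp only [MC, h1, h2, h3]; push_cast; ring
  have eD : MD u w c = (d:F) * MD u w a := by
    simp only [MD, h0, h1, h3]; push_cast; ring
  match l with
  | some x =>
    rcases h with ⟨k1, k2⟩
    rw [eA, eB] at k1; rw [eC, eD] at k2
    constructor
    · rcases mul_eq_zero.1 (by linear_combination k1 : (d:F) * (MA u w a * x + MB u w a) = 0)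
        with h | h
      · exact absurd h hd
      · exact h
    · rcases mul_eq_zero.1 (by linear_combination k2 : (d:F) * (MC u w a * x + MD u w a) = 0)
        with h | h
      · exact absurd h hd
      · exact h
  | none =>
    rcases h with ⟨k1, k2⟩
    rw [eA] at k1; rw [eC] at k2
    constructor
    · rcases mul_eq_zero.1 k1 with h | h
      · exact absurd h hd
      · exact h
    · rcases mul_eq_zero.1 k2 with h | h
      · exact absurd h hd
      · exact h

end Field2
section Inj

variable {p : ℕ} [Fact p.Prime]

lemma two_ne_zero' (hp2 : p % 2 = 1) : (2 : ZMod p) ≠ 0 := by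
  have h2 : ((2 : ℕ) : ZMod p) = (2 : ZMod p) := by push_cast; ring
  rw [← h2, Ne, ZMod.natCast_eq_zero_iff]
  intro h
  have h1 : 1 < p := (Fact.out : p.Prime).one_lt
  have := Nat.le_of_dvd (by norm_num) h
  omega

set_option maxHeartbeats 2000000 in
lemma inj_aux (hp2 : p % 2 = 1) (u w : ZMod p) (huw : u^2 + w^2 = -1)
    {l : Option (ZMod p)} {a b : Q}
    (hapos : 0 < a.1) (ha1 : Even a.2.1) (ha2 : Even a.2.2.1) (ha3 : Even a.2.2.2)
    (hanrm : nrm a = p)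
    (hbpos : 0 < b.1) (hb1 : Even b.2.1) (hb2 : Even b.2.2.1) (hb3 : Even b.2.2.2)
    (hbnrm : nrm b = p)
    (hka : Kills u w a l) (hkb : Kills u w b l) : a = b := by
  obtain ⟨a0,a1,a2,a3⟩ := a
  obtain ⟨b0,b1,b2,b3⟩ := b
  dsimp only at hapos ha1 ha2 ha3 hbpos hb1 hb2 hb3
  have hp0 : (p:ℤ) ≠ 0 := Int.natCast_ne_zero.mpr (Fact.out : p.Prime).ne_zero
  have two_ne : (2 : ZMod p) ≠ 0 := two_ne_zero' hp2
  set A : Q := (a0,a1,a2,a3) with hA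
  set B : Q := (b0,b1,b2,b3) with hB
  obtain ⟨c, hc⟩ : ∃ c : Q, c = qmul A (qconj B) := ⟨_, rfl⟩
  have eA : MA u w c = MA u w A * MD u w B - MB u w A * MC u w B := by
    rw [hc, mulMA u w huw, conjMA, conjMC]; ring
  have eB : MB u w c = -(MA u w A * MB u w B) + MB u w A * MA u w B := by
    rw [hc, mulMB u w huw, conjMB, conjMD]; ring
  have eC : MC u w c = MC u w A * MD u w B - MD u w A * MC u w B := by
    rw [hc, mulMC u w huw, conjMA, conjMC]; ring
  have eD : MD u w c = -(MC u w A * MB u w B) + MD u w A * MA u w B := by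
    rw [hc, mulMD u w huw, conjMB, conjMD]; ring
  have hz : MA u w c = 0 ∧ MB u w c = 0 ∧ MC u w c = 0 ∧ MD u w c = 0 := by
    cases l with
    | some x =>
      obtain ⟨ka1, ka2⟩ := hka
      obtain ⟨kb1, kb2⟩ := hkb
      refine ⟨?_, ?_, ?_, ?_⟩
      · rw [eA]; linear_combination (MA u w A) * kb2 - (MC u w B) * ka1
      · rw [eB]; linear_combination -(MA u w A) * kb1 + (MA u w B) * ka1
      · rw [eC]; linear_combination (MC u w A) * kb2 - (MC u w B) * ka2
      · rw [eD]; linear_combination -(MC u w A) * kb1 + (MA u w B) * ka2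
    | none =>
      obtain ⟨ka1, ka2⟩ := hka
      obtain ⟨kb1, kb2⟩ := hkb
      refine ⟨?_, ?_, ?_, ?_⟩
      · rw [eA, ka1, kb2]; ring
      · rw [eB, ka1, kb1]; ring
      · rw [eC, ka2, kb2]; ring
      · rw [eD, ka2, kb1]; ring
  obtain ⟨z0, z1, z2, z3⟩ := Minj u w huw two_ne c hz.1 hz.2.1 hz.2.2.1 hz.2.2.2
  have d0 : (p:ℤ) ∣ c.1 := (ZMod.intCast_zmod_eq_zero_iff_dvd _ _).1 z0
  have d1 : (p:ℤ) ∣ c.2.1 := (ZMod.intCast_zmod_eq_zero_iff_dvd _ _).1 z1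
  have d2 : (p:ℤ) ∣ c.2.2.1 := (ZMod.intCast_zmod_eq_zero_iff_dvd _ _).1 z2
  have d3 : (p:ℤ) ∣ c.2.2.2 := (ZMod.intCast_zmod_eq_zero_iff_dvd _ _).1 z3
  have hcn : nrm c = (p:ℤ) * p := by
    rw [hc, nrm_qmul, nrm_qconj, hanrm, hbnrm]
  obtain ⟨s1, hs1⟩ := ha1; obtain ⟨s2, hs2⟩ := ha2; obtain ⟨s3, hs3⟩ := ha3
  obtain ⟨t1, ht1⟩ := hb1; obtain ⟨t2, ht2⟩ := hb2; obtain ⟨t3, ht3⟩ := hb3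
  have he1 : Even c.2.1 := by
    refine ⟨a0 * (-t1) + s1 * b0 + s2*(-t3)*2 + s3*t2*2, ?_⟩
    simp only [hc, hA, hB, qmul, qconj]
    rw [hs1, ht1, hs2, ht2, hs3, ht3]; ring
  have he2 : Even c.2.2.1 := by
    refine ⟨a0 * (-t2) + s1*t3*2 + s2 * b0 + s3*(-t1)*2, ?_⟩
    simp only [hc, hA, hB, qmul, qconj]
    rw [hs1, ht1, hs2, ht2, hs3, ht3]; ring
  have he3 : Even c.2.2.2 := by
    refine ⟨a0 * (-t3) + s1*(-t2)*2 + s2*t1*2 + s3 * b0, ?_⟩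
    simp only [hc, hA, hB, qmul, qconj]
    rw [hs1, ht1, hs2, ht2, hs3, ht3]; ring
  have hpodd : ¬ Even (p:ℤ) := by
    intro h
    rw [Int.even_iff] at h
    omega
  have hpp : (0:ℤ) < p := by exact_mod_cast (Fact.out : p.Prime).pos
  have key : ∀ x : ℤ, (p:ℤ) ∣ x → Even x → x^2 ≤ (p:ℤ)*p → x = 0 := by
    intro x hdvd hev hle
    obtain ⟨t, ht⟩ := hdvd
    have htev : Even t := by
      rcases Int.even_mul.1 (ht ▸ hev) with h | h
      · exact absurd h hpodd
      · exact h
    have hps : (0:ℤ) < (p:ℤ) * (p:ℤ) := by positivity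
    have hmul : (p:ℤ) * p * t^2 ≤ (p:ℤ) * p * 1 := by
      calc (p:ℤ) * p * t^2 = ((p:ℤ)*t)^2 := by ring
        _ = x^2 := by rw [ht]
        _ ≤ (p:ℤ)*p := hle
        _ = (p:ℤ)*p*1 := by ring
    have ht2 : t^2 ≤ 1 := le_of_mul_le_mul_left hmul hps
    have hbnd : -1 ≤ t ∧ t ≤ 1 := ⟨by nlinarith, by nlinarith⟩
    have ht0 : t = 0 := by
      rw [Int.even_iff] at htev
      omega
    rw [ht, ht0, mul_zero]
  have hsq : c.2.1^2 ≤ (p:ℤ)*p ∧ c.2.2.1^2 ≤ (p:ℤ)*p ∧ c.2.2.2^2 ≤ (p:ℤ)*p := by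
    simp only [nrm] at hcn
    refine ⟨by nlinarith [sq_nonneg c.1, sq_nonneg c.2.2.1, sq_nonneg c.2.2.2],
      by nlinarith [sq_nonneg c.1, sq_nonneg c.2.1, sq_nonneg c.2.2.2],
      by nlinarith [sq_nonneg c.1, sq_nonneg c.2.1, sq_nonneg c.2.2.1]⟩
  have hc1 : c.2.1 = 0 := key _ d1 he1 hsq.1
  have hc2 : c.2.2.1 = 0 := key _ d2 he2 hsq.2.1
  have hc3 : c.2.2.2 = 0 := key _ d3 he3 hsq.2.2
  have hc0sq : c.1^2 = (p:ℤ)*p := by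
    simp only [nrm] at hcn
    rw [hc1, hc2, hc3] at hcn
    linarith
  have hc0 : c.1 = p ∨ c.1 = -p := by
    have h := mul_eq_zero.1 (by linear_combination hc0sq : (c.1 - p) * (c.1 + p) = 0)
    rcases h with h | h
    · exact Or.inl (by linarith)
    · exact Or.inr (by linarith)
  simp only [hc, hA, hB, qmul, qconj] at hc0 hc1 hc2 hc3
  simp only [hA, hB, nrm] at hbnrm
  rcases hc0 with hcp | hcm
  · have e0 : (p:ℤ) * b0 = (p:ℤ) * a0 := by
      linear_combination (-b0)*hcp + b1*hc1 + b2*hc2 + b3*hc3 + a0*hbnrm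
    have e1 : (p:ℤ) * b1 = (p:ℤ) * a1 := by
      linear_combination (-b1)*hcp - b0*hc1 - b3*hc2 + b2*hc3 + a1*hbnrm
    have e2 : (p:ℤ) * b2 = (p:ℤ) * a2 := by
      linear_combination (-b2)*hcp + b3*hc1 - b0*hc2 - b1*hc3 + a2*hbnrm
    have e3 : (p:ℤ) * b3 = (p:ℤ) * a3 := by
      linear_combination (-b3)*hcp - b2*hc1 + b1*hc2 - b0*hc3 + a3*hbnrm
    have f0 := mul_left_cancel₀ hp0 e0
    have f1 := mul_left_cancel₀ hp0 e1
    have f2 := mul_left_cancel₀ hp0 e2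
    have f3 := mul_left_cancel₀ hp0 e3
    rw [hA, hB, f0, f1, f2, f3]
  · exfalso
    have e0 : (p:ℤ) * b0 + (p:ℤ) * a0 = 0 := by
      linear_combination b0*hcm - b1*hc1 - b2*hc2 - b3*hc3 - a0*hbnrm
    nlinarith

end Inj
section Descent

variable {p : ℕ} [Fact p.Prime]

/-- One division step: if `qmul (qconj δ) b = D • a`, then `a` kills the same line
and `D^2 * nrm a = nrm δ * nrm b`. -/
lemma step (u w : ZMod p) (huw : u^2 + w^2 = -1) {l : Option (ZMod p)} (b δ a : Q)
    (hkb : Kills u w b l) (D : ℤ) (hD : (D : ZMod p) ≠ 0)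
    (h0 : (qmul (qconj δ) b).1 = D * a.1)
    (h1 : (qmul (qconj δ) b).2.1 = D * a.2.1)
    (h2 : (qmul (qconj δ) b).2.2.1 = D * a.2.2.1)
    (h3 : (qmul (qconj δ) b).2.2.2 = D * a.2.2.2) :
    Kills u w a l ∧ D^2 * nrm a = nrm δ * nrm b := by
  constructor
  · exact kills_of_smul u w D hD a _ h0 h1 h2 h3
      (kills_qmul u w huw (qconj δ) b hkb)
  · have hn : nrm (qmul (qconj δ) b) = nrm δ * nrm b := by
      rw [nrm_qmul, nrm_qconj]
    rw [← hn]
    simp only [nrm]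
    rw [h0, h1, h2, h3]
    ring

lemma sq_mod_two (x : ℤ) : x^2 % 2 = x % 2 := by
  rcases Int.even_or_odd x with ⟨t, rfl⟩ | ⟨t, rfl⟩
  · have h : (t + t)^2 = 4*t^2 := by ring
    rw [h]
    have h2 : (t+t) % 2 = 0 := by omega
    rw [h2]
    generalize t^2 = s
    omega
  · have h : (2*t + 1)^2 = 4*(t^2+t) + 1 := by ring
    rw [h]
    have h2 : (2*t+1) % 2 = 1 := by omega
    rw [h2]
    generalize t^2 + t = s
    omega

lemma sq_mod_four (x : ℤ) : x^2 % 4 = x % 2 := by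
  rcases Int.even_or_odd x with ⟨t, rfl⟩ | ⟨t, rfl⟩
  · have h : (t + t)^2 = 4*t^2 := by ring
    rw [h]
    have h2 : (t+t) % 2 = 0 := by omega
    rw [h2]
    generalize t^2 = s
    omega
  · have h : (2*t + 1)^2 = 4*(t^2+t) + 1 := by ring
    rw [h]
    have h2 : (2*t+1) % 2 = 1 := by omega
    rw [h2]
    generalize t^2 + t = s
    omega

/-- balanced residue -/
lemma bal_spec (x m : ℤ) (hm : 0 < m) (hmo : m % 2 = 1) :
    ∃ y k : ℤ, x = y + m * k ∧ 2 * |y| ≤ m - 1 := by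
  have h0 : 0 ≤ x % m := Int.emod_nonneg x (by omega)
  have h1 : x % m < m := Int.emod_lt_of_pos x hm
  have hdef : x % m + m * (x / m) = x := Int.emod_add_mul_ediv x m
  by_cases hlt : 2*(x % m) < m
  · refine ⟨x % m, x / m, by linarith, ?_⟩
    rw [abs_of_nonneg h0]
    omega
  · refine ⟨x % m - m, x / m + 1, by linarith, ?_⟩
    rw [abs_of_nonpos (by omega)]
    omega

lemma natCast_ne_zero_of_lt {m : ℕ} (h0 : 0 < m) (h1 : m < p) : ((m:ℤ) : ZMod p) ≠ 0 := by
  rw [Ne, ZMod.intCast_zmod_eq_zero_iff_dvd]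
  intro h
  have h' : (p:ℤ) ≤ m := Int.le_of_dvd (by exact_mod_cast h0) h
  have : p ≤ m := by exact_mod_cast h'
  omega

end Descent
section Descent2

variable {p : ℕ} [Fact p.Prime]

lemma half (hp2 : p % 2 = 1) (u w : ZMod p) (huw : u^2 + w^2 = -1) {l : Option (ZMod p)}
    (b δ : Q) (hkb : Kills u w b l) (K : ℤ) (hnb : nrm b = 2 * K) (hδ : nrm δ = 2)
    (h0 : (qmul (qconj δ) b).1 % 2 = 0)
    (h1 : (qmul (qconj δ) b).2.1 % 2 = 0)
    (h2 : (qmul (qconj δ) b).2.2.1 % 2 = 0)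
    (h3 : (qmul (qconj δ) b).2.2.2 % 2 = 0) :
    ∃ a : Q, Kills u w a l ∧ nrm a = K := by
  have e0 : (qmul (qconj δ) b).1 = 2 * ((qmul (qconj δ) b).1 / 2) := by omega
  have e1 : (qmul (qconj δ) b).2.1 = 2 * ((qmul (qconj δ) b).2.1 / 2) := by omega
  have e2 : (qmul (qconj δ) b).2.2.1 = 2 * ((qmul (qconj δ) b).2.2.1 / 2) := by omega
  have e3 : (qmul (qconj δ) b).2.2.2 = 2 * ((qmul (qconj δ) b).2.2.2 / 2) := by omega
  have h2ne : ((2:ℤ) : ZMod p) ≠ 0 := by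
    have := two_ne_zero' (p := p) hp2
    simpa using this
  obtain ⟨hka, hna⟩ := step u w huw b δ
    ((qmul (qconj δ) b).1 / 2, (qmul (qconj δ) b).2.1 / 2,
     (qmul (qconj δ) b).2.2.1 / 2, (qmul (qconj δ) b).2.2.2 / 2) hkb 2 h2ne e0 e1 e2 e3
  rw [hδ, hnb] at hna
  exact ⟨_, hka, by linarith⟩

set_option maxHeartbeats 4000000 in
lemma descent (hp2 : p % 2 = 1) (u w : ZMod p) (huw : u^2 + w^2 = -1) (l : Option (ZMod p)) :
    ∀ m : ℕ, 0 < m → m < p → ∀ b : Q, Kills u w b l → nrm b = (m:ℤ) * p →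
    ∃ a : Q, Kills u w a l ∧ nrm a = p := by
  intro m
  induction m using Nat.strong_induction_on with
  | _ m ih =>
  intro hm0 hmp b hkb hnb
  by_cases hm1 : m = 1
  · subst hm1
    exact ⟨b, hkb, by rw [hnb]; push_cast; ring⟩
  have hm2 : 2 ≤ m := by omega
  obtain ⟨b0,b1,b2,b3⟩ := b
  have hnb' : b0^2+b1^2+b2^2+b3^2 = (m:ℤ)*p := by simpa [nrm] using hnb
  by_cases hme : m % 2 = 0
  · -- even case
    obtain ⟨k, hk⟩ : ∃ k, m = 2*k := ⟨m/2, by omega⟩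
    have hkk : (m:ℤ) * p = 2 * ((k:ℤ) * p) := by push_cast [hk]; ring
    have hnb2 : nrm (b0,b1,b2,b3) = 2 * ((k:ℤ)*p) := by rw [hnb, hkk]
    -- parity of the sum
    have hps : (b0+b1+b2+b3) % 2 = 0 := by
      have s0 := sq_mod_two b0
      have s1 := sq_mod_two b1
      have s2 := sq_mod_two b2
      have s3 := sq_mod_two b3
      have hS : b0^2+b1^2+b2^2+b3^2 = 2*((k:ℤ)*p) := by rw [hnb', hkk]
      generalize hg : (k:ℤ)*(p:ℤ) = KP at hS
      generalize b0^2 = S0 at s0 hS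
      generalize b1^2 = S1 at s1 hS
      generalize b2^2 = S2 at s2 hS
      generalize b3^2 = S3 at s3 hS
      omega
    have hrec : ∀ a : Q, Kills u w a l → nrm a = (k:ℤ)*p → ∃ a' : Q, Kills u w a' l ∧ nrm a' = p := by
      intro a hka hna
      exact ih k (by omega) (by omega) (by omega) a hka hna
    by_cases h01 : (b0 - b1) % 2 = 0
    · have hc0 : (qmul (qconj ((1:ℤ),(1:ℤ),(0:ℤ),(0:ℤ))) (b0,b1,b2,b3)).1 = b0 + b1 := by
        simp only [qmul, qconj]; ring
      have hc1 : (qmul (qconj ((1:ℤ),(1:ℤ),(0:ℤ),(0:ℤ))) (b0,b1,b2,b3)).2.1 = b1 - b0 := by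
        simp only [qmul, qconj]; ring
      have hc2 : (qmul (qconj ((1:ℤ),(1:ℤ),(0:ℤ),(0:ℤ))) (b0,b1,b2,b3)).2.2.1 = b2 + b3 := by
        simp only [qmul, qconj]; ring
      have hc3 : (qmul (qconj ((1:ℤ),(1:ℤ),(0:ℤ),(0:ℤ))) (b0,b1,b2,b3)).2.2.2 = b3 - b2 := by
        simp only [qmul, qconj]; ring
      obtain ⟨a, hka, hna⟩ := half hp2 u w huw (b0,b1,b2,b3) ((1:ℤ),(1:ℤ),(0:ℤ),(0:ℤ)) hkb
        ((k:ℤ)*p) hnb2 (by norm_num [nrm]) (by rw [hc0]; omega) (by rw [hc1]; omega)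
        (by rw [hc2]; omega) (by rw [hc3]; omega)
      exact hrec a hka hna
    · by_cases h02 : (b0 - b2) % 2 = 0
      · have hc0 : (qmul (qconj ((1:ℤ),(0:ℤ),(1:ℤ),(0:ℤ))) (b0,b1,b2,b3)).1 = b0 + b2 := by
          simp only [qmul, qconj]; ring
        have hc1 : (qmul (qconj ((1:ℤ),(0:ℤ),(1:ℤ),(0:ℤ))) (b0,b1,b2,b3)).2.1 = b1 - b3 := by
          simp only [qmul, qconj]; ring
        have hc2 : (qmul (qconj ((1:ℤ),(0:ℤ),(1:ℤ),(0:ℤ))) (b0,b1,b2,b3)).2.2.1 = b2 - b0 := by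
          simp only [qmul, qconj]; ring
        have hc3 : (qmul (qconj ((1:ℤ),(0:ℤ),(1:ℤ),(0:ℤ))) (b0,b1,b2,b3)).2.2.2 = b3 + b1 := by
          simp only [qmul, qconj]; ring
        obtain ⟨a, hka, hna⟩ := half hp2 u w huw (b0,b1,b2,b3) ((1:ℤ),(0:ℤ),(1:ℤ),(0:ℤ)) hkb
          ((k:ℤ)*p) hnb2 (by norm_num [nrm]) (by rw [hc0]; omega) (by rw [hc1]; omega)
          (by rw [hc2]; omega) (by rw [hc3]; omega)
        exact hrec a hka hna
      · have hc0 : (qmul (qconj ((1:ℤ),(0:ℤ),(0:ℤ),(1:ℤ))) (b0,b1,b2,b3)).1 = b0 + b3 := by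
          simp only [qmul, qconj]; ring
        have hc1 : (qmul (qconj ((1:ℤ),(0:ℤ),(0:ℤ),(1:ℤ))) (b0,b1,b2,b3)).2.1 = b1 + b2 := by
          simp only [qmul, qconj]; ring
        have hc2 : (qmul (qconj ((1:ℤ),(0:ℤ),(0:ℤ),(1:ℤ))) (b0,b1,b2,b3)).2.2.1 = b2 - b1 := by
          simp only [qmul, qconj]; ring
        have hc3 : (qmul (qconj ((1:ℤ),(0:ℤ),(0:ℤ),(1:ℤ))) (b0,b1,b2,b3)).2.2.2 = b3 - b0 := by
          simp only [qmul, qconj]; ring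
        obtain ⟨a, hka, hna⟩ := half hp2 u w huw (b0,b1,b2,b3) ((1:ℤ),(0:ℤ),(0:ℤ),(1:ℤ)) hkb
          ((k:ℤ)*p) hnb2 (by norm_num [nrm]) (by rw [hc0]; omega) (by rw [hc1]; omega)
          (by rw [hc2]; omega) (by rw [hc3]; omega)
        exact hrec a hka hna
  · -- odd case
    have hmz : (0:ℤ) < (m:ℤ) := by exact_mod_cast hm0
    have hmo : (m:ℤ) % 2 = 1 := by omega
    obtain ⟨δ0, k0, hb0, ha0⟩ := bal_spec b0 (m:ℤ) hmz hmo
    obtain ⟨δ1, k1, hb1, ha1⟩ := bal_spec b1 (m:ℤ) hmz hmo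
    obtain ⟨δ2, k2, hb2, ha2⟩ := bal_spec b2 (m:ℤ) hmz hmo
    obtain ⟨δ3, k3, hb3, ha3⟩ := bal_spec b3 (m:ℤ) hmz hmo
    by_cases hδ0 : δ0 = 0 ∧ δ1 = 0 ∧ δ2 = 0 ∧ δ3 = 0
    · exfalso
      obtain ⟨z0, z1, z2, z3⟩ := hδ0
      rw [z0] at hb0; rw [z1] at hb1; rw [z2] at hb2; rw [z3] at hb3
      have hmul : (m:ℤ) * ((m:ℤ) * (k0^2+k1^2+k2^2+k3^2)) = (m:ℤ) * p := by
        rw [← hnb']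
        rw [hb0, hb1, hb2, hb3]; ring
      have hcan := mul_left_cancel₀ (by omega : (m:ℤ) ≠ 0) hmul
      have hdvd : (m:ℤ) ∣ (p:ℤ) := ⟨_, hcan.symm⟩
      have hdvd' : m ∣ p := Int.natCast_dvd_natCast.mp hdvd
      rcases (Fact.out : p.Prime).eq_one_or_self_of_dvd m hdvd' with h | h <;> omega
    · -- δ ≠ 0
      have hδnz : ¬(δ0 = 0 ∧ δ1 = 0 ∧ δ2 = 0 ∧ δ3 = 0) := hδ0
      obtain ⟨m2, hm2def⟩ : ∃ m2 : ℤ, m2 = p - 2*(δ0*k0+δ1*k1+δ2*k2+δ3*k3)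
          - m*(k0^2+k1^2+k2^2+k3^2) := ⟨_, rfl⟩
      have hδn : δ0^2+δ1^2+δ2^2+δ3^2 = (m:ℤ) * m2 := by
        rw [hm2def]
        linear_combination hnb' - (b0+δ0+(m:ℤ)*k0)*hb0 - (b1+δ1+(m:ℤ)*k1)*hb1
          - (b2+δ2+(m:ℤ)*k2)*hb2 - (b3+δ3+(m:ℤ)*k3)*hb3
      have hδpos : 0 < δ0^2+δ1^2+δ2^2+δ3^2 := by
        rcases lt_or_eq_of_le (by positivity : (0:ℤ) ≤ δ0^2+δ1^2+δ2^2+δ3^2) with h | h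
        · exact h
        · exfalso
          apply hδnz
          have e0 : δ0^2 = 0 :=
            le_antisymm (by linarith [sq_nonneg δ1, sq_nonneg δ2, sq_nonneg δ3]) (sq_nonneg δ0)
          have e1 : δ1^2 = 0 :=
            le_antisymm (by linarith [sq_nonneg δ0, sq_nonneg δ2, sq_nonneg δ3]) (sq_nonneg δ1)
          have e2 : δ2^2 = 0 :=
            le_antisymm (by linarith [sq_nonneg δ0, sq_nonneg δ1, sq_nonneg δ3]) (sq_nonneg δ2)
          have e3 : δ3^2 = 0 :=
            le_antisymm (by linarith [sq_nonneg δ0, sq_nonneg δ1, sq_nonneg δ2]) (sq_nonneg δ3)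
          exact ⟨sq_eq_zero_iff.1 e0, sq_eq_zero_iff.1 e1, sq_eq_zero_iff.1 e2, sq_eq_zero_iff.1 e3⟩
      have hm2pos : 0 < m2 := by
        by_contra hcon
        push_neg at hcon
        have : (m:ℤ) * m2 ≤ 0 := mul_nonpos_of_nonneg_of_nonpos (le_of_lt hmz) hcon
        linarith [hδn, hδpos]
      have q0 : 4*δ0^2 ≤ ((m:ℤ)-1)^2 := by nlinarith [ha0, abs_nonneg δ0, sq_abs δ0]
      have q1 : 4*δ1^2 ≤ ((m:ℤ)-1)^2 := by nlinarith [ha1, abs_nonneg δ1, sq_abs δ1]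
      have q2 : 4*δ2^2 ≤ ((m:ℤ)-1)^2 := by nlinarith [ha2, abs_nonneg δ2, sq_abs δ2]
      have q3 : 4*δ3^2 ≤ ((m:ℤ)-1)^2 := by nlinarith [ha3, abs_nonneg δ3, sq_abs δ3]
      have h44 : 4*((m:ℤ)*m2) ≤ 4*((m:ℤ)-1)^2 := by linarith [q0, q1, q2, q3, hδn]
      have hm2lt : m2 < m := by
        by_contra hge
        push_neg at hge
        have hc : (m:ℤ)*(m:ℤ) ≤ (m:ℤ)*m2 := mul_le_mul_of_nonneg_left hge (le_of_lt hmz)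
        nlinarith [h44, hc, hmz]
      -- quotient
      have h0 : (qmul (qconj (δ0,δ1,δ2,δ3)) (b0,b1,b2,b3)).1
          = (m:ℤ) * (m2 + (δ0*k0+δ1*k1+δ2*k2+δ3*k3)) := by
        simp only [qmul, qconj]
        linear_combination hδn + δ0*hb0 + δ1*hb1 + δ2*hb2 + δ3*hb3
      have h1 : (qmul (qconj (δ0,δ1,δ2,δ3)) (b0,b1,b2,b3)).2.1
          = (m:ℤ) * (δ0*k1 - δ1*k0 - δ2*k3 + δ3*k2) := by
        simp only [qmul, qconj]
        linear_combination δ0*hb1 - δ1*hb0 - δ2*hb3 + δ3*hb2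
      have h2 : (qmul (qconj (δ0,δ1,δ2,δ3)) (b0,b1,b2,b3)).2.2.1
          = (m:ℤ) * (δ0*k2 + δ1*k3 - δ2*k0 - δ3*k1) := by
        simp only [qmul, qconj]
        linear_combination δ0*hb2 + δ1*hb3 - δ2*hb0 - δ3*hb1
      have h3 : (qmul (qconj (δ0,δ1,δ2,δ3)) (b0,b1,b2,b3)).2.2.2
          = (m:ℤ) * (δ0*k3 - δ1*k2 + δ2*k1 - δ3*k0) := by
        simp only [qmul, qconj]
        linear_combination δ0*hb3 - δ1*hb2 + δ2*hb1 - δ3*hb0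
      obtain ⟨hka, hna⟩ := step u w huw (b0,b1,b2,b3) (δ0,δ1,δ2,δ3)
        (m2 + (δ0*k0+δ1*k1+δ2*k2+δ3*k3), δ0*k1 - δ1*k0 - δ2*k3 + δ3*k2,
         δ0*k2 + δ1*k3 - δ2*k0 - δ3*k1, δ0*k3 - δ1*k2 + δ2*k1 - δ3*k0) hkb (m:ℤ)
        (natCast_ne_zero_of_lt hm0 hmp) h0 h1 h2 h3
      have hδnrm : nrm (δ0,δ1,δ2,δ3) = (m:ℤ)*m2 := by simpa [nrm] using hδn
      rw [hδnrm, hnb] at hna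
      have hnna : nrm (m2 + (δ0*k0+δ1*k1+δ2*k2+δ3*k3), δ0*k1 - δ1*k0 - δ2*k3 + δ3*k2,
          δ0*k2 + δ1*k3 - δ2*k0 - δ3*k1, δ0*k3 - δ1*k2 + δ2*k1 - δ3*k0) = m2 * p := by
        have hmsq : ((m:ℤ))^2 ≠ 0 := by positivity
        apply mul_left_cancel₀ hmsq
        rw [hna]; ring
      have htn : ((m2.toNat : ℕ) : ℤ) = m2 := Int.toNat_of_nonneg (le_of_lt hm2pos)
      exact ih m2.toNat (by omega) (by omega) (by omega) _ hka (by rw [htn]; exact hnna)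

end Descent2
section Start

variable {p : ℕ} [Fact p.Prime]

set_option maxHeartbeats 1000000 in
lemma exists_start (hp2 : p % 2 = 1) (u w : ZMod p) (huw : u^2 + w^2 = -1)
    (l : Option (ZMod p)) :
    ∃ (b : Q) (m : ℕ), Kills u w b l ∧ nrm b = (m:ℤ) * p ∧ 0 < m ∧ m < p := by
  haveI : NeZero p := ⟨(Fact.out : p.Prime).ne_zero⟩
  have two_ne := two_ne_zero' (p := p) hp2
  have h2i : (2 : ZMod p) * (2:ZMod p)⁻¹ = 1 := mul_inv_cancel₀ two_ne
  obtain ⟨A, B, C, D, hone, hdet, hkil⟩ :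
      ∃ A B C D : ZMod p, (A = 1 ∨ B = 1) ∧ A*D - B*C = 0 ∧
        (∀ b : Q, MA u w b = A → MB u w b = B → MC u w b = C → MD u w b = D →
          Kills u w b l) := by
    cases l with
    | some x =>
      exact ⟨1, -x, 0, 0, Or.inl rfl, by ring,
        fun b h1 h2 h3 h4 => ⟨by rw [h1, h2]; ring, by rw [h3, h4]; ring⟩⟩
    | none => exact ⟨0, 1, 0, 0, Or.inr rfl, by ring, fun b h1 h2 h3 h4 => ⟨h1, h3⟩⟩
  obtain ⟨b0, hb0c, hb0b⟩ : ∃ x : ℤ, ((x : ZMod p) = (2:ZMod p)⁻¹*(A+D)) ∧ x.natAbs ≤ p / 2 :=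
    ⟨_, ZMod.coe_valMinAbs _, ZMod.natAbs_valMinAbs_le _⟩
  obtain ⟨b1, hb1c, hb1b⟩ : ∃ x : ℤ,
      ((x : ZMod p) = -((2:ZMod p)⁻¹*(u*(A-D) + w*(B+C)))) ∧ x.natAbs ≤ p / 2 :=
    ⟨_, ZMod.coe_valMinAbs _, ZMod.natAbs_valMinAbs_le _⟩
  obtain ⟨b2, hb2c, hb2b⟩ : ∃ x : ℤ, ((x : ZMod p) = (2:ZMod p)⁻¹*(B-C)) ∧ x.natAbs ≤ p / 2 :=
    ⟨_, ZMod.coe_valMinAbs _, ZMod.natAbs_valMinAbs_le _⟩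
  obtain ⟨b3, hb3c, hb3b⟩ : ∃ x : ℤ,
      ((x : ZMod p) = (2:ZMod p)⁻¹*(w*(A-D) - u*(B+C))) ∧ x.natAbs ≤ p / 2 :=
    ⟨_, ZMod.coe_valMinAbs _, ZMod.natAbs_valMinAbs_le _⟩
  have hMA : MA u w (b0,b1,b2,b3) = A := by
    simp only [MA]
    rw [hb0c, hb1c, hb3c]
    linear_combination A * h2i - (2:ZMod p)⁻¹*(A-D) * huw
  have hMB : MB u w (b0,b1,b2,b3) = B := by
    simp only [MB]
    rw [hb2c, hb1c, hb3c]
    linear_combination B * h2i - (2:ZMod p)⁻¹*(B+C) * huw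
  have hMC : MC u w (b0,b1,b2,b3) = C := by
    simp only [MC]
    rw [hb2c, hb1c, hb3c]
    linear_combination C * h2i - (2:ZMod p)⁻¹*(B+C) * huw
  have hMD : MD u w (b0,b1,b2,b3) = D := by
    simp only [MD]
    rw [hb0c, hb1c, hb3c]
    linear_combination D * h2i + (2:ZMod p)⁻¹*(A-D) * huw
  have hdet2 : ((nrm (b0,b1,b2,b3) : ℤ) : ZMod p) = 0 := by
    have h := detM u w huw (b0,b1,b2,b3)
    rw [hMA, hMB, hMC, hMD] at h
    rw [← h]
    exact hdet
  have hdvd : (p:ℤ) ∣ nrm (b0,b1,b2,b3) := (ZMod.intCast_zmod_eq_zero_iff_dvd _ _).1 hdet2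
  have hQ : 2*((p/2 : ℕ):ℤ) + 1 = (p:ℤ) := by
    have : 2*(p/2) + 1 = p := by omega
    exact_mod_cast this
  have sqb : ∀ x : ℤ, x.natAbs ≤ p / 2 → x^2 ≤ ((p/2 : ℕ):ℤ)^2 := by
    intro x hx
    have h1 : (x.natAbs : ℤ) ≤ ((p/2 : ℕ) : ℤ) := by exact_mod_cast hx
    have h2 : |x| = (x.natAbs : ℤ) := Int.abs_eq_natAbs x
    nlinarith [abs_nonneg x, sq_abs x]
  have sq0 := sqb b0 hb0b
  have sq1 := sqb b1 hb1b
  have sq2 := sqb b2 hb2b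
  have sq3 := sqb b3 hb3b
  have hpp : (0:ℤ) < p := by exact_mod_cast (Fact.out : p.Prime).pos
  have hnrm_lt : nrm (b0,b1,b2,b3) < (p:ℤ)*p := by
    simp only [nrm]
    nlinarith [sq0, sq1, sq2, sq3, hQ, hpp]
  have hnrm_nonneg : 0 ≤ nrm (b0,b1,b2,b3) := by
    simp only [nrm]; positivity
  have hnrm_pos : 0 < nrm (b0,b1,b2,b3) := by
    rcases lt_or_eq_of_le hnrm_nonneg with h | h
    · exact h
    · exfalso
      have hz : b0 = 0 ∧ b1 = 0 ∧ b2 = 0 ∧ b3 = 0 := by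
        simp only [nrm] at h
        have e0 : b0^2 = 0 :=
          le_antisymm (by nlinarith [sq_nonneg b1, sq_nonneg b2, sq_nonneg b3]) (sq_nonneg b0)
        have e1 : b1^2 = 0 :=
          le_antisymm (by nlinarith [sq_nonneg b0, sq_nonneg b2, sq_nonneg b3]) (sq_nonneg b1)
        have e2 : b2^2 = 0 :=
          le_antisymm (by nlinarith [sq_nonneg b0, sq_nonneg b1, sq_nonneg b3]) (sq_nonneg b2)
        have e3 : b3^2 = 0 :=
          le_antisymm (by nlinarith [sq_nonneg b0, sq_nonneg b1, sq_nonneg b2]) (sq_nonneg b3)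
        exact ⟨sq_eq_zero_iff.1 e0, sq_eq_zero_iff.1 e1, sq_eq_zero_iff.1 e2, sq_eq_zero_iff.1 e3⟩
      obtain ⟨z0, z1, z2, z3⟩ := hz
      rw [z0] at hb0c; rw [z1] at hb1c; rw [z2] at hb2c; rw [z3] at hb3c
      rcases hone with h1 | h1
      · have hA0 : A = 0 := by
          rw [← hMA]
          simp only [MA, z0, z1, z3]
          push_cast
          ring
        rw [h1] at hA0
        exact one_ne_zero hA0
      · have hB0 : B = 0 := by
          rw [← hMB]
          simp only [MB, z1, z2, z3]
          push_cast
          ring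
        rw [h1] at hB0
        exact one_ne_zero hB0
  obtain ⟨M, hM⟩ := hdvd
  have hM0 : 0 < M := by nlinarith
  have hMp : M < p := by nlinarith
  refine ⟨(b0,b1,b2,b3), M.toNat, hkil _ hMA hMB hMC hMD, ?_, by omega, by omega⟩
  rw [hM]
  have : ((M.toNat : ℕ) : ℤ) = M := Int.toNat_of_nonneg (le_of_lt hM0)
  rw [this]
  ring

lemma notall (hp2 : p % 2 = 1) (u w : ZMod p) (huw : u^2 + w^2 = -1) (a : Q)
    (ha : nrm a = p) :
    ¬ (MA u w a = 0 ∧ MB u w a = 0 ∧ MC u w a = 0 ∧ MD u w a = 0) := by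
  rintro ⟨h1, h2, h3, h4⟩
  obtain ⟨z0, z1, z2, z3⟩ := Minj u w huw (two_ne_zero' hp2) a h1 h2 h3 h4
  have hp0 : (p:ℤ) ≠ 0 := Int.natCast_ne_zero.mpr (Fact.out : p.Prime).ne_zero
  obtain ⟨t0, ht0⟩ := (ZMod.intCast_zmod_eq_zero_iff_dvd _ _).1 z0
  obtain ⟨t1, ht1⟩ := (ZMod.intCast_zmod_eq_zero_iff_dvd _ _).1 z1
  obtain ⟨t2, ht2⟩ := (ZMod.intCast_zmod_eq_zero_iff_dvd _ _).1 z2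
  obtain ⟨t3, ht3⟩ := (ZMod.intCast_zmod_eq_zero_iff_dvd _ _).1 z3
  obtain ⟨a0,a1,a2,a3⟩ := a
  simp only [nrm] at ha
  simp only at ht0 ht1 ht2 ht3
  have h5 : (p:ℤ) * ((p:ℤ)*(t0^2+t1^2+t2^2+t3^2)) = (p:ℤ) * 1 := by
    rw [ht0, ht1, ht2, ht3] at ha
    linear_combination ha
  have h6 := mul_left_cancel₀ hp0 h5
  have hS : 0 ≤ t0^2+t1^2+t2^2+t3^2 := by positivity
  have hp2' : (2:ℤ) ≤ p := by exact_mod_cast (Fact.out : p.Prime).two_le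
  rcases le_or_gt (t0^2+t1^2+t2^2+t3^2) 0 with h | h
  · nlinarith
  · have h7 : 1 ≤ t0^2+t1^2+t2^2+t3^2 := h
    nlinarith

end Start
section Adjust

variable {p : ℕ} [Fact p.Prime]

lemma build (u w : ZMod p) (huw : u^2 + w^2 = -1) {l : Option (ZMod p)} (a g a' : Q)
    (hk : Kills u w a l) (hn : nrm a = p) (hg : nrm g = 1) (heq : qmul g a = a') :
    Kills u w a' l ∧ nrm a' = p := by
  constructor
  · rw [← heq]; exact kills_qmul u w huw g a hk
  · rw [← heq, nrm_qmul, hg, hn]; ring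

set_option maxHeartbeats 1000000 in
lemma adjust (hp4 : p % 4 = 1) (u w : ZMod p) (huw : u^2 + w^2 = -1) {l : Option (ZMod p)}
    (a : Q) (hk : Kills u w a l) (ha : nrm a = p) :
    ∃ a' : Q, Kills u w a' l ∧ nrm a' = (p:ℤ) ∧ 0 < a'.1 ∧ Odd a'.1 ∧ Even a'.2.1 ∧
      Even a'.2.2.1 ∧ Even a'.2.2.2 := by
  obtain ⟨a0,a1,a2,a3⟩ := a
  have hnrm' : a0^2+a1^2+a2^2+a3^2 = (p:ℤ) := by simpa [nrm] using ha
  have hp4' : (a0^2+a1^2+a2^2+a3^2) % 4 = 1 := by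
    rw [hnrm']
    omega
  have s0 := sq_mod_four a0
  have s1 := sq_mod_four a1
  have s2 := sq_mod_four a2
  have s3 := sq_mod_four a3
  have hpat : (a0 % 2 = 1 ∧ a1 % 2 = 0 ∧ a2 % 2 = 0 ∧ a3 % 2 = 0) ∨
      (a1 % 2 = 1 ∧ a0 % 2 = 0 ∧ a2 % 2 = 0 ∧ a3 % 2 = 0) ∨
      (a2 % 2 = 1 ∧ a0 % 2 = 0 ∧ a1 % 2 = 0 ∧ a3 % 2 = 0) ∨
      (a3 % 2 = 1 ∧ a0 % 2 = 0 ∧ a1 % 2 = 0 ∧ a2 % 2 = 0) := by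
    generalize a0^2 = S0 at s0 hp4'
    generalize a1^2 = S1 at s1 hp4'
    generalize a2^2 = S2 at s2 hp4'
    generalize a3^2 = S3 at s3 hp4'
    omega
  rcases hpat with ⟨h, e1, e2, e3⟩ | ⟨h, e0, e2, e3⟩ | ⟨h, e0, e1, e3⟩ | ⟨h, e0, e1, e2⟩
  · by_cases hs : 0 < a0
    · exact ⟨(a0,a1,a2,a3), hk, ha, hs, Int.odd_iff.2 h, Int.even_iff.2 e1,
        Int.even_iff.2 e2, Int.even_iff.2 e3⟩
    · obtain ⟨hk', hn'⟩ := build u w huw (a0,a1,a2,a3) ((-1),0,0,0) (-a0,-a1,-a2,-a3) hk ha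
        (by norm_num [nrm])
        (by simp only [qmul, Prod.mk.injEq]; refine ⟨by ring, by ring, by ring, by ring⟩)
      exact ⟨(-a0,-a1,-a2,-a3), hk', hn', show (0:ℤ) < -a0 by omega,
        Int.odd_iff.2 (show (-a0) % 2 = 1 by omega),
        Int.even_iff.2 (show (-a1) % 2 = 0 by omega),
        Int.even_iff.2 (show (-a2) % 2 = 0 by omega),
        Int.even_iff.2 (show (-a3) % 2 = 0 by omega)⟩
  · by_cases hs : a1 < 0
    · obtain ⟨hk', hn'⟩ := build u w huw (a0,a1,a2,a3) (0,1,0,0) (-a1,a0,-a3,a2) hk ha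
        (by norm_num [nrm])
        (by simp only [qmul, Prod.mk.injEq]; refine ⟨by ring, by ring, by ring, by ring⟩)
      exact ⟨(-a1,a0,-a3,a2), hk', hn', show (0:ℤ) < -a1 by omega,
        Int.odd_iff.2 (show (-a1) % 2 = 1 by omega),
        Int.even_iff.2 (show (a0) % 2 = 0 by omega),
        Int.even_iff.2 (show (-a3) % 2 = 0 by omega),
        Int.even_iff.2 (show (a2) % 2 = 0 by omega)⟩
    · obtain ⟨hk', hn'⟩ := build u w huw (a0,a1,a2,a3) (0,-1,0,0) (a1,-a0,a3,-a2) hk ha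
        (by norm_num [nrm])
        (by simp only [qmul, Prod.mk.injEq]; refine ⟨by ring, by ring, by ring, by ring⟩)
      exact ⟨(a1,-a0,a3,-a2), hk', hn', show (0:ℤ) < a1 by omega,
        Int.odd_iff.2 (show (a1) % 2 = 1 by omega),
        Int.even_iff.2 (show (-a0) % 2 = 0 by omega),
        Int.even_iff.2 (show (a3) % 2 = 0 by omega),
        Int.even_iff.2 (show (-a2) % 2 = 0 by omega)⟩
  · by_cases hs : a2 < 0
    · obtain ⟨hk', hn'⟩ := build u w huw (a0,a1,a2,a3) (0,0,1,0) (-a2,a3,a0,-a1) hk ha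
        (by norm_num [nrm])
        (by simp only [qmul, Prod.mk.injEq]; refine ⟨by ring, by ring, by ring, by ring⟩)
      exact ⟨(-a2,a3,a0,-a1), hk', hn', show (0:ℤ) < -a2 by omega,
        Int.odd_iff.2 (show (-a2) % 2 = 1 by omega),
        Int.even_iff.2 (show (a3) % 2 = 0 by omega),
        Int.even_iff.2 (show (a0) % 2 = 0 by omega),
        Int.even_iff.2 (show (-a1) % 2 = 0 by omega)⟩
    · obtain ⟨hk', hn'⟩ := build u w huw (a0,a1,a2,a3) (0,0,-1,0) (a2,-a3,-a0,a1) hk ha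
        (by norm_num [nrm])
        (by simp only [qmul, Prod.mk.injEq]; refine ⟨by ring, by ring, by ring, by ring⟩)
      exact ⟨(a2,-a3,-a0,a1), hk', hn', show (0:ℤ) < a2 by omega,
        Int.odd_iff.2 (show (a2) % 2 = 1 by omega),
        Int.even_iff.2 (show (-a3) % 2 = 0 by omega),
        Int.even_iff.2 (show (-a0) % 2 = 0 by omega),
        Int.even_iff.2 (show (a1) % 2 = 0 by omega)⟩
  · by_cases hs : a3 < 0
    · obtain ⟨hk', hn'⟩ := build u w huw (a0,a1,a2,a3) (0,0,0,1) (-a3,-a2,a1,a0) hk ha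
        (by norm_num [nrm])
        (by simp only [qmul, Prod.mk.injEq]; refine ⟨by ring, by ring, by ring, by ring⟩)
      exact ⟨(-a3,-a2,a1,a0), hk', hn', show (0:ℤ) < -a3 by omega,
        Int.odd_iff.2 (show (-a3) % 2 = 1 by omega),
        Int.even_iff.2 (show (-a2) % 2 = 0 by omega),
        Int.even_iff.2 (show (a1) % 2 = 0 by omega),
        Int.even_iff.2 (show (a0) % 2 = 0 by omega)⟩
    · obtain ⟨hk', hn'⟩ := build u w huw (a0,a1,a2,a3) (0,0,0,-1) (a3,a2,-a1,-a0) hk ha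
        (by norm_num [nrm])
        (by simp only [qmul, Prod.mk.injEq]; refine ⟨by ring, by ring, by ring, by ring⟩)
      exact ⟨(a3,a2,-a1,-a0), hk', hn', show (0:ℤ) < a3 by omega,
        Int.odd_iff.2 (show (a3) % 2 = 1 by omega),
        Int.even_iff.2 (show (a2) % 2 = 0 by omega),
        Int.even_iff.2 (show (-a1) % 2 = 0 by omega),
        Int.even_iff.2 (show (-a0) % 2 = 0 by omega)⟩

end Adjust

end QCount

open QCount in
/-- for a prime `p ≡ 1 (mod 4)`, there are exactly `p + 1`
quadruples `(a₀,a₁,a₂,a₃) ∈ ℤ⁴` with `a₀ > 0`, `a₀` odd, `a₁, a₂, a₃` even and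
`a₀² + a₁² + a₂² + a₃² = p`. -/
theorem card_quaternions_norm_p (p : ℕ) (hp : p.Prime) (h4 : p % 4 = 1) :
    {q : ℤ × ℤ × ℤ × ℤ | 0 < q.1 ∧ Odd q.1 ∧ Even q.2.1 ∧ Even q.2.2.1 ∧
      Even q.2.2.2 ∧
      q.1 ^ 2 + q.2.1 ^ 2 + q.2.2.1 ^ 2 + q.2.2.2 ^ 2 = (p : ℤ)}.ncard =
      p + 1 := by
  haveI : Fact p.Prime := ⟨hp⟩
  haveI : NeZero p := ⟨hp.ne_zero⟩
  have hp2 : p % 2 = 1 := by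
    have := hp.two_le
    omega
  obtain ⟨u, w, huw⟩ := ZMod.sq_add_sq p (-1)
  set S : Set Q := {q : ℤ × ℤ × ℤ × ℤ | 0 < q.1 ∧ Odd q.1 ∧ Even q.2.1 ∧ Even q.2.2.1 ∧
      Even q.2.2.2 ∧
      q.1 ^ 2 + q.2.1 ^ 2 + q.2.2.1 ^ 2 + q.2.2.2 ^ 2 = (p : ℤ)} with hS
  have hnrmS : ∀ q ∈ S, nrm q = (p:ℤ) := fun q hq => hq.2.2.2.2.2
  have hmem : ∀ q ∈ S, Kills u w q (lineOf u w q) := by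
    intro q hq
    apply kills_lineOf u w q _ huw
    rw [hnrmS q hq]
    exact_mod_cast ZMod.natCast_self p
  have hinj : Set.InjOn (lineOf u w) S := by
    intro a ha b hb hfeq
    have hka := hmem a ha
    have hkb := hmem b hb
    rw [hfeq] at hka
    exact inj_aux hp2 u w huw ha.1 ha.2.2.1 ha.2.2.2.1 ha.2.2.2.2.1 (hnrmS a ha)
      hb.1 hb.2.2.1 hb.2.2.2.1 hb.2.2.2.2.1 (hnrmS b hb) hka hkb
  have hsurj : ∀ l' : Option (ZMod p), ∃ a ∈ S, lineOf u w a = l' := by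
    intro l'
    obtain ⟨b, m, hkb, hnb, hm0, hmp⟩ := exists_start hp2 u w huw l'
    obtain ⟨a, hka, hna⟩ := descent hp2 u w huw l' m hm0 hmp b hkb hnb
    obtain ⟨a', hk', hn', hpos, hodd, he1, he2, he3⟩ := adjust h4 u w huw a hka hna
    have ha'S : a' ∈ S := ⟨hpos, hodd, he1, he2, he3, hn'⟩
    refine ⟨a', ha'S, ?_⟩
    exact kills_unique u w a' (notall hp2 u w huw a' hn') (hmem a' ha'S) hk'
  have himg : lineOf u w '' S = Set.univ := by
    apply Set.eq_univ_of_forall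
    intro l'
    obtain ⟨a, haS, hfa⟩ := hsurj l'
    exact ⟨a, haS, hfa⟩
  calc S.ncard = (lineOf u w '' S).ncard := (Set.ncard_image_of_injOn hinj).symm
    _ = (Set.univ : Set (Option (ZMod p))).ncard := by rw [himg]
    _ = Nat.card (Option (ZMod p)) := Set.ncard_univ _
    _ = Fintype.card (Option (ZMod p)) := Nat.card_eq_fintype_card
    _ = Fintype.card (ZMod p) + 1 := Fintype.card_option
    _ = p + 1 := by rw [ZMod.card]
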